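/- arXiv:1910.04780 — 2 statements merged into one kernel-verified Lean document; each statement's English description precedes it below -/
import Mathlib

section
/- Let k ≥ 3 and let s_1, ..., s_k be pairwise distinct complex numbers. Define, for 1 ≤ l ≤ k, c_l = ∏_{r=1}^{l−1} (s_r − s_{r+1})/(s_r − s_l) (with c_1 = 1) and c'_l = (−1)^{k−l} ∏_{r=l}^{k−1} (s_r − s_{r+1})/(s_l − s_{r+1}) (with c'_k = 1). Then ∑_{l=1}^{k} c_l · s_l · c'_l = 0. -/
/-!
Splitting off the factor `(-1) ^ (k - 1) * ∏ r, (s r - s (r + 1))` common to all terms, the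
product `c_l * c'_l` is the barycentric weight `w_l = ∏_{j ≠ l} (s_l - s_j)⁻¹` of the nodes.
The sum `∑ l, w_l * s_l` is the coefficient of `X ^ (k - 1)` in the Lagrange interpolant of `X`
at the nodes, which is `X` itself; since `k - 1 > 1` that coefficient vanishes.
-/

open Finset Polynomial

namespace Lagrange

variable {F : Type*} [Field F] {ι : Type*} [DecidableEq ι] {s : Finset ι} {v : ι → F}

theorem coeff_basis_card_sub_one {i : ι} (hi : i ∈ s) :
    (Lagrange.basis s v i).coeff (#s - 1) = nodalWeight s v i := by
  rw [basis_eq_prod_sub_inv_mul_nodal_div hi, ← nodal_erase_eq_nodal_div hi, coeff_C_mul,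
    ← card_erase_of_mem hi, ← natDegree_nodal (R := F), nodal_monic.coeff_natDegree, mul_one]

-- Compare the coefficients of `X ^ (#s - 1)` in `X ^ m` and in its Lagrange interpolant.
theorem sum_pow_mul_nodalWeight_eq_zero (hvs : Set.InjOn v s) {m : ℕ} (hm : m + 1 < #s) :
    ∑ i ∈ s, v i ^ m * nodalWeight s v i = 0 := by
  have hX : (X ^ m : F[X]) = interpolate s v (fun i => v i ^ m) :=
    eq_interpolate_of_eval_eq _ hvs (by rw [degree_X_pow]; exact_mod_cast (by omega : m < #s))
      fun i _ => by rw [eval_pow, eval_X]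
  have hcoeff := congrArg (coeff · (#s - 1)) hX
  simp only [interpolate_apply, finsetSum_coeff, coeff_C_mul, coeff_X_pow] at hcoeff
  rw [if_neg (by omega)] at hcoeff
  rw [hcoeff]
  exact sum_congr rfl fun i hi => by rw [coeff_basis_card_sub_one hi]

theorem nodalWeight_range (v : ℕ → F) {k l : ℕ} (hl : l < k) :
    nodalWeight (range k) v l =
      (∏ j ∈ range l, (v l - v j)⁻¹) * ∏ j ∈ Ico (l + 1) k, (v l - v j)⁻¹ := by
  have hsplit : (range k).erase l = range l ∪ Ico (l + 1) k := by
    ext j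
    simp only [mem_erase, mem_range, mem_union, mem_Ico]
    omega
  rw [nodalWeight, hsplit, prod_union]
  exact disjoint_left.mpr fun j hj hj' => by simp only [mem_range, mem_Ico] at hj hj'; omega

end Lagrange

section Chain

variable {F : Type*} [Field F] (v : ℕ → F)

theorem prod_range_div_sub (l : ℕ) :
    ∏ r ∈ range l, (v r - v (r + 1)) / (v r - v l) =
      (-1) ^ l * (∏ r ∈ range l, (v r - v (r + 1))) * ∏ j ∈ range l, (v l - v j)⁻¹ := by
  have hflip : ∀ r, (v r - v l)⁻¹ = -1 * (v l - v r)⁻¹ := fun r => by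
    rw [← neg_sub, inv_neg, neg_one_mul]
  simp only [div_eq_mul_inv, hflip, prod_mul_distrib, prod_const, card_range]
  ring

theorem prod_Ico_div_sub (l n : ℕ) :
    ∏ r ∈ Ico l n, (v r - v (r + 1)) / (v l - v (r + 1)) =
      (∏ r ∈ Ico l n, (v r - v (r + 1))) * ∏ j ∈ Ico (l + 1) (n + 1), (v l - v j)⁻¹ := by
  rw [← prod_Ico_add' (fun j => (v l - v j)⁻¹), ← prod_mul_distrib]
  simp only [div_eq_mul_inv]

theorem chain_constants_mul_eq_nodalWeight {k l : ℕ} (hl : l < k) :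
    (∏ r ∈ range l, (v r - v (r + 1)) / (v r - v l)) * v l *
        ((-1) ^ (k - 1 - l) * ∏ r ∈ Ico l (k - 1), (v r - v (r + 1)) / (v l - v (r + 1))) =
      (-1) ^ (k - 1) * (∏ r ∈ range (k - 1), (v r - v (r + 1))) *
        (v l * Lagrange.nodalWeight (range k) v l) := by
  rw [prod_range_div_sub, prod_Ico_div_sub, Lagrange.nodalWeight_range v hl,
    Nat.sub_add_cancel (by omega), ← prod_range_mul_prod_Ico _ (by omega : l ≤ k - 1)]
  have hsign : (-1 : F) ^ (k - 1) = (-1) ^ (k - 1 - l) * (-1) ^ l := by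
    rw [← pow_add, Nat.sub_add_cancel (by omega)]
  rw [hsign]
  ring

end Chain

/-- for `k ≥ 3` and pairwise distinct complex numbers `s_1, ..., s_k`
(realized 0-based as `s 0, ..., s (k-1)`), with
`c_l = ∏_{r=1}^{l−1} (s_r − s_{r+1})/(s_r − s_l)` and
`c'_l = (−1)^{k−l} ∏_{r=l}^{k−1} (s_r − s_{r+1})/(s_l − s_{r+1})`,
one has `∑_{l=1}^k c_l · s_l · c'_l = 0`. -/
theorem weighted_chain_constants_sum_eq_zero (k : ℕ) (hk : 3 ≤ k) (s : ℕ → ℂ)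
    (hs : ∀ i j, i < k → j < k → i ≠ j → s i ≠ s j) :
    ∑ l ∈ Finset.range k,
        (∏ r ∈ Finset.range l, (s r - s (r + 1)) / (s r - s l)) * s l *
          ((-1 : ℂ) ^ (k - 1 - l) *
            ∏ r ∈ Finset.Ico l (k - 1), (s r - s (r + 1)) / (s l - s (r + 1))) = 0 := by
  have hinj : Set.InjOn s (range k) := fun i hi j hj hij => by
    by_contra hne
    exact hs i j (mem_range.mp hi) (mem_range.mp hj) hne hij
  have hsum : ∑ l ∈ range k, s l * Lagrange.nodalWeight (range k) s l = 0 := by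
    simpa only [pow_one] using
      Lagrange.sum_pow_mul_nodalWeight_eq_zero hinj (m := 1) (by rw [card_range]; omega)
  rw [sum_congr rfl fun l hl => chain_constants_mul_eq_nodalWeight s (mem_range.mp hl),
    ← mul_sum, hsum, mul_zero]
end

section
/- Let n ≥ 1, let s_1, ..., s_n be pairwise distinct complex numbers, and let x_{ji} ∈ ℂ be arbitrary for all 1 ≤ i < j ≤ n. Define the n×n lower unitriangular matrix M by M_{ii} = 1, M_{ji} = 0 for i > j, and for i < j, M_{ji} = ∑_{i = i_1 < i_2 < ... < i_k = j} c(i_1,...,i_k) ∏_{l=1}^{k−1} x_{i_{l+1} i_l}, where the sum ranges over all strictly increasing chains from i to j and c(i_1,...,i_k) = ∏_{l=1}^{k−1} (s_{i_l} − s_{i_{l+1}})/(s_{i_l} − s_{i_k}). Define N the same way with c replaced by c'(i_1,...,i_k) = (−1)^{k−1} ∏_{l=1}^{k−1} (s_{i_l} − s_{i_{l+1}})/(s_{i_1} − s_{i_{l+1}}). Then N · M is the identity matrix; in particular M is invertible with M^{−1} = N. -/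
open Finset

/-- The product of `f a b` over consecutive pairs `(a, b)` of the list `L`
(the empty product being `1`). -/
def consecPairsProd {α : Type*} (f : α → α → ℂ) (L : List α) : ℂ :=
  ((L.zip L.tail).map fun p => f p.1 p.2).prod

/-- The sum over all strictly increasing chains `i = i_1 < i_2 < ... < i_k = j` in `Fin n`
(equivalently, over all subsets `T` of the open interval `(i, j)`, the chain being the sorted
list of `{i} ∪ T ∪ {j}`) of the product of `f` over consecutive pairs of the chain. -/
noncomputable def chainSum {n : ℕ} (f : Fin n → Fin n → ℂ) (i j : Fin n) : ℂ :=
  ∑ T ∈ (Finset.Ioo i j).powerset,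
    consecPairsProd f ((insert i (insert j T)).sort (· ≤ ·))

/-- The lower unitriangular matrix `M` of the paper (Appendix B.2), with entry in row `j`,
column `i` (for `i < j`) given by
`M_{ji} = ∑_{i = i_1 < ... < i_k = j} c(i_1,...,i_k) ∏_{l=1}^{k−1} x_{i_{l+1} i_l}`,
where `c(i_1,...,i_k) = ∏_{l=1}^{k−1} (s_{i_l} − s_{i_{l+1}})/(s_{i_l} − s_{i_k})`. -/
noncomputable def Mmat (n : ℕ) (s : Fin n → ℂ) (x : Fin n → Fin n → ℂ) :
    Matrix (Fin n) (Fin n) ℂ :=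
  Matrix.of fun j i =>
    if i = j then 1
    else if i < j then chainSum (fun a b => (s a - s b) / (s a - s j) * x b a) i j
    else 0

/-- The lower unitriangular matrix `N` defined as `M` but with `c` replaced by
`c'(i_1,...,i_k) = (−1)^{k−1} ∏_{l=1}^{k−1} (s_{i_l} − s_{i_{l+1}})/(s_{i_1} − s_{i_{l+1}})`. -/
noncomputable def Nmat (n : ℕ) (s : Fin n → ℂ) (x : Fin n → Fin n → ℂ) :
    Matrix (Fin n) (Fin n) ℂ :=
  Matrix.of fun j i =>
    if i = j then 1
    else if i < j then chainSum (fun a b => -((s a - s b) / (s i - s b)) * x b a) i j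
    else 0

/-!
Multiplying out `(N M)_{jk}` gives a sum over chains `V` from `k` to `j` together with a marked
point `r ∈ V` where the `N`-chain and the `M`-chain meet. For a fixed chain, the weight
`(s_a - s_b) x_{ba}` of each step is common to all `r`, and the normalizing denominators combine
to `∏_{t ∈ V, t ≠ r} (s_t - s_r)⁻¹`. Up to a common sign these are the leading coefficients
of the Lagrange basis polynomials for the nodes `s_t`, `t ∈ V`; as those polynomials sum to `1`,
the sum over `r ∈ V` vanishes as soon as `V` has two points.
-/

section ConsecPairsProd

variable {α : Type*}

theorem consecPairsProd_cons_cons (f : α → α → ℂ) (a b : α) (L : List α) :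
    consecPairsProd f (a :: b :: L) = f a b * consecPairsProd f (b :: L) := rfl

theorem consecPairsProd_mul (f g : α → α → ℂ) (L : List α) :
    consecPairsProd (fun a b => f a b * g a b) L = consecPairsProd f L * consecPairsProd g L := by
  simp [consecPairsProd, List.prod_map_mul]

theorem consecPairsProd_fst (u : α → ℂ) :
    ∀ L : List α, consecPairsProd (fun a _ => u a) L = (L.dropLast.map u).prod
  | [] | [_] => rfl
  | a :: b :: L => by
    rw [consecPairsProd_cons_cons, consecPairsProd_fst u (b :: L)]
    simp

theorem consecPairsProd_snd (u : α → ℂ) :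
    ∀ L : List α, consecPairsProd (fun _ b => u b) L = (L.tail.map u).prod
  | [] | [_] => rfl
  | a :: b :: L => by
    rw [consecPairsProd_cons_cons, consecPairsProd_snd u (b :: L)]
    simp

theorem consecPairsProd_append_cons (f : α → α → ℂ) (A B : List α) (r : α) :
    consecPairsProd f (A ++ r :: B) =
      consecPairsProd f (A ++ [r]) * consecPairsProd f (r :: B) := by
  induction A with
  | nil => simp [consecPairsProd]
  | cons a A ih =>
    cases A with
    | nil => simp [consecPairsProd]
    | cons b A =>
      simp only [List.cons_append, consecPairsProd_cons_cons] at ih ⊢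
      rw [ih, mul_assoc]

end ConsecPairsProd

section SortSplit

variable {α : Type*} [LinearOrder α]

theorem Finset.sort_eq_of_pairwise_lt {V : Finset α} {L : List α} (hL : L.Pairwise (· < ·))
    (hmem : ∀ a, a ∈ L ↔ a ∈ V) : V.sort (· ≤ ·) = L :=
  (sortedLT_sort V).pairwise.eq_of_mem_iff hL fun a => by rw [mem_sort, hmem]

variable (V : Finset α) {r : α}

theorem Finset.sort_eq_sort_filter_lt_append (hr : r ∈ V) :
    V.sort (· ≤ ·) =
      (V.filter (· < r)).sort (· ≤ ·) ++ r :: (V.filter (r < ·)).sort (· ≤ ·) := by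
  refine sort_eq_of_pairwise_lt ?_ fun a => ?_
  · simp only [List.pairwise_append, List.pairwise_cons, List.mem_cons, mem_sort, mem_filter]
    refine ⟨(sortedLT_sort _).pairwise, ⟨fun _ h => h.2, (sortedLT_sort _).pairwise⟩, ?_⟩
    rintro a ⟨-, har⟩ b (rfl | ⟨-, hrb⟩)
    exacts [har, har.trans hrb]
  · simp only [List.mem_append, List.mem_cons, mem_sort, mem_filter]
    rcases lt_trichotomy a r with h | rfl | h
    · simp [h, h.ne, h.not_gt]
    · simp [hr]
    · simp [h, h.ne', h.not_gt]

theorem Finset.sort_filter_le_eq_append (hr : r ∈ V) :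
    (V.filter (· ≤ r)).sort (· ≤ ·) = (V.filter (· < r)).sort (· ≤ ·) ++ [r] := by
  refine sort_eq_of_pairwise_lt ?_ fun a => ?_
  · simpa [List.pairwise_append] using (sortedLT_sort _).pairwise
  · simp only [List.mem_append, mem_sort, mem_filter, List.mem_singleton, le_iff_lt_or_eq]
    constructor
    · rintro (⟨h, h'⟩ | rfl) <;> simp_all
    · rintro ⟨h, h' | rfl⟩ <;> simp_all

theorem Finset.sort_filter_ge_eq_cons (hr : r ∈ V) :
    (V.filter (r ≤ ·)).sort (· ≤ ·) = r :: (V.filter (r < ·)).sort (· ≤ ·) := by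
  refine sort_eq_of_pairwise_lt ?_ fun a => ?_
  · simpa using (sortedLT_sort _).pairwise
  · simp only [List.mem_cons, mem_sort, mem_filter, le_iff_lt_or_eq]
    constructor
    · rintro (rfl | ⟨h, h'⟩) <;> simp_all
    · rintro ⟨h, h' | rfl⟩ <;> simp_all

theorem Finset.prod_map_sort {M : Type*} [CommMonoid M] (F : Finset α) (u : α → M) :
    ((F.sort (· ≤ ·)).map u).prod = ∏ a ∈ F, u a := by
  rw [← List.prod_toFinset _ (sort_nodup _ _), sort_toFinset]

theorem Finset.prod_erase_eq_prod_filter_lt_mul {M : Type*} [CommMonoid M] (u : α → M) :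
    ∏ t ∈ V.erase r, u t =
      (∏ t ∈ V.filter (· < r), u t) * ∏ t ∈ V.filter (r < ·), u t := by
  rw [← filter_ne', ← prod_union (disjoint_filter.2 fun _ _ h => h.not_gt), ← filter_or]
  simp only [ne_iff_lt_or_gt]

theorem consecPairsProd_sort_filter_ge_mul_sort_filter_le (hr : r ∈ V) (u : α → ℂ)
    (g : α → α → ℂ) :
    consecPairsProd (fun a b => u b * g a b) ((V.filter (r ≤ ·)).sort (· ≤ ·)) *
        consecPairsProd (fun a b => u a * g a b) ((V.filter (· ≤ r)).sort (· ≤ ·)) =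
      (∏ t ∈ V.erase r, u t) * consecPairsProd g (V.sort (· ≤ ·)) := by
  rw [consecPairsProd_mul, consecPairsProd_mul, consecPairsProd_fst, consecPairsProd_snd,
    sort_filter_le_eq_append V hr, sort_filter_ge_eq_cons V hr, sort_eq_sort_filter_lt_append V hr,
    consecPairsProd_append_cons g _ ((V.filter (r < ·)).sort (· ≤ ·)), List.dropLast_concat,
    List.tail_cons, prod_map_sort, prod_map_sort, prod_erase_eq_prod_filter_lt_mul]
  ring

end SortSplit

section Chains

variable {α : Type*} [LinearOrder α] [LocallyFiniteOrder α]

def chainsBetween (a b : α) : Finset (Finset α) :=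
  (Icc a b).powerset.filter fun C => a ∈ C ∧ b ∈ C

@[simp]
theorem mem_chainsBetween {a b : α} {C : Finset α} :
    C ∈ chainsBetween a b ↔ C ⊆ Icc a b ∧ a ∈ C ∧ b ∈ C := by
  simp [chainsBetween]

theorem chainsBetween_self (a : α) : chainsBetween a a = {{a}} := by
  ext C
  rw [mem_chainsBetween, Icc_self, and_self, subset_singleton_iff', mem_singleton,
    eq_singleton_iff_unique_mem, and_comm]

theorem one_lt_card_of_mem_chainsBetween {a b : α} (hab : a ≠ b) {C : Finset α}
    (hC : C ∈ chainsBetween a b) : 1 < C.card :=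
  one_lt_card.2 ⟨a, (mem_chainsBetween.1 hC).2.1, b, (mem_chainsBetween.1 hC).2.2, hab⟩

theorem filter_union_of_mem_chainsBetween {a b r : α} {C D : Finset α}
    (hC : C ∈ chainsBetween r b) (hD : D ∈ chainsBetween a r) :
    (C ∪ D).filter (r ≤ ·) = C ∧ (C ∪ D).filter (· ≤ r) = D := by
  simp only [mem_chainsBetween, subset_iff, mem_Icc] at hC hD
  constructor <;> ext t <;> simp only [mem_filter, mem_union] <;> grind

theorem sum_Icc_sum_chainsBetween_sum_chainsBetween {β : Type*} [AddCommMonoid β] (a b : α)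
    (Φ : α → Finset α → Finset α → β) :
    ∑ r ∈ Icc a b, ∑ C ∈ chainsBetween r b, ∑ D ∈ chainsBetween a r, Φ r C D =
      ∑ V ∈ chainsBetween a b, ∑ r ∈ V,
        Φ r (V.filter (r ≤ ·)) (V.filter (· ≤ r)) := by
  simp_rw [← sum_product']
  rw [sum_sigma', sum_sigma']
  refine sum_nbij' (fun p => ⟨p.2.1 ∪ p.2.2, p.1⟩)
    (fun q => ⟨q.2, q.1.filter (q.2 ≤ ·), q.1.filter (· ≤ q.2)⟩) ?_ ?_ ?_ ?_ ?_
  · rintro ⟨r, C, D⟩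
    simp only [mem_sigma, mem_product, mem_chainsBetween, mem_Icc, subset_iff, mem_union]
    grind
  · rintro ⟨V, r⟩
    simp only [mem_sigma, mem_product, mem_chainsBetween, mem_Icc, subset_iff, mem_filter]
    grind
  · rintro ⟨r, C, D⟩ h
    simp only [mem_sigma, mem_product] at h
    simp [filter_union_of_mem_chainsBetween h.2.1 h.2.2]
  · rintro ⟨V, r⟩
    simp only [mem_sigma, Sigma.mk.injEq, heq_eq_eq, and_true]
    intro h
    ext t
    simp only [mem_union, mem_filter]
    grind
  · rintro ⟨r, C, D⟩ h
    simp only [mem_sigma, mem_product] at h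
    simp [filter_union_of_mem_chainsBetween h.2.1 h.2.2]

end Chains

theorem chainSum_eq_sum_chainsBetween {n : ℕ} (f : Fin n → Fin n → ℂ) {i j : Fin n}
    (hij : i ≤ j) :
    chainSum f i j = ∑ C ∈ chainsBetween i j, consecPairsProd f (C.sort (· ≤ ·)) := by
  refine sum_nbij' (fun T => insert i (insert j T)) (fun C => C ∩ Ioo i j) ?_ ?_ ?_ ?_
    fun _ _ => rfl
  · intro T hT
    simp only [mem_powerset, subset_iff, mem_Ioo] at hT
    simp only [mem_chainsBetween, subset_iff, mem_insert, mem_Icc]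
    grind
  · intro C hC
    simp only [mem_chainsBetween] at hC
    simp [inter_subset_right]
  · intro T hT
    simp only [mem_powerset, subset_iff, mem_Ioo] at hT
    ext t
    simp only [mem_inter, mem_insert, mem_Ioo]
    grind
  · intro C hC
    simp only [mem_chainsBetween, subset_iff, mem_Icc] at hC
    ext t
    simp only [mem_inter, mem_insert, mem_Ioo]
    grind

open Polynomial in
theorem Lagrange.sum_nodalWeight_eq_zero {F ι : Type*} [Field F] [DecidableEq ι] {s : Finset ι}
    {v : ι → F} (hvs : Set.InjOn v s) (hs : 1 < s.card) :
    ∑ i ∈ s, nodalWeight s v i = 0 := by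
  have h := congrArg (coeff · (s.card - 1)) (sum_basis hvs (card_pos.1 (by omega)))
  simp only [finsetSum_coeff, coeff_one, if_neg (by omega : s.card - 1 ≠ 0)] at h
  rw [← h]
  refine sum_congr rfl fun i hi => ?_
  rw [← natDegree_basis hvs hi, ← leadingCoeff, Lagrange.basis, leadingCoeff_prod, nodalWeight]
  refine prod_congr rfl fun j _ => ?_
  rw [Lagrange.basisDivisor, leadingCoeff_mul, leadingCoeff_C, (monic_X_sub_C (v j)).leadingCoeff,
    mul_one]

theorem sum_prod_erase_inv_sub_eq_zero {ι K : Type*} [DecidableEq ι] [Field K] {V : Finset ι}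
    {s : ι → K} (hs : Set.InjOn s V) (hV : 1 < V.card) :
    ∑ r ∈ V, ∏ t ∈ V.erase r, (s t - s r)⁻¹ = 0 := by
  simpa [Lagrange.nodalWeight, neg_add_eq_sub, prod_inv_distrib] using
    Lagrange.sum_nodalWeight_eq_zero (neg_injective.comp_injOn hs) hV

section Matrices

variable {n : ℕ} (s : Fin n → ℂ) (x : Fin n → Fin n → ℂ)

theorem chainSum_self (f : Fin n → Fin n → ℂ) (i : Fin n) : chainSum f i i = 1 := by
  simp [chainSum, consecPairsProd]

theorem Nmat_apply (j i : Fin n) :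
    Nmat n s x j i =
      if i ≤ j then chainSum (fun a b => -((s a - s b) / (s i - s b)) * x b a) i j else 0 := by
  rcases lt_trichotomy i j with h | rfl | h
  · simp [Nmat, h, h.le, h.ne]
  · simp [Nmat, chainSum_self]
  · simp [Nmat, h.not_ge, h.not_gt, h.ne']

theorem Mmat_apply (j i : Fin n) :
    Mmat n s x j i =
      if i ≤ j then chainSum (fun a b => (s a - s b) / (s a - s j) * x b a) i j else 0 := by
  rcases lt_trichotomy i j with h | rfl | h
  · simp [Mmat, h, h.le, h.ne]
  · simp [Mmat, chainSum_self]
  · simp [Mmat, h.not_ge, h.not_gt, h.ne']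

theorem Nmat_mul_Mmat_apply (j k : Fin n) :
    (Nmat n s x * Mmat n s x) j k =
      ∑ i ∈ Icc k j, chainSum (fun a b => -((s a - s b) / (s i - s b)) * x b a) i j *
        chainSum (fun a b => (s a - s b) / (s a - s i) * x b a) k i := by
  rw [Matrix.mul_apply, ← filter_le_le_eq_Icc, sum_filter]
  refine sum_congr rfl fun i _ => ?_
  rw [Nmat_apply, Mmat_apply]
  by_cases hij : i ≤ j <;> by_cases hki : k ≤ i <;> simp [hij, hki]

theorem Nmat_mul_Mmat_apply_eq_sum_chainsBetween (j k : Fin n) :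
    (Nmat n s x * Mmat n s x) j k =
      ∑ V ∈ chainsBetween k j,
        consecPairsProd (fun a b => (s a - s b) * x b a) (V.sort (· ≤ ·)) *
          ∑ r ∈ V, ∏ t ∈ V.erase r, (s t - s r)⁻¹ := by
  set w : Fin n → Fin n → ℂ := fun a b => (s a - s b) * x b a
  have hN (r : Fin n) : (fun a b => -((s a - s b) / (s r - s b)) * x b a) =
      fun a b => (s b - s r)⁻¹ * w a b := by
    funext a b; rw [← neg_sub (s r) (s b), inv_neg]; ring
  have hM (r : Fin n) : (fun a b => (s a - s b) / (s a - s r) * x b a) =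
      fun a b => (s a - s r)⁻¹ * w a b := by
    funext a b; ring
  calc (Nmat n s x * Mmat n s x) j k
      = ∑ r ∈ Icc k j, ∑ C ∈ chainsBetween r j, ∑ D ∈ chainsBetween k r,
          consecPairsProd (fun a b => (s b - s r)⁻¹ * w a b) (C.sort (· ≤ ·)) *
            consecPairsProd (fun a b => (s a - s r)⁻¹ * w a b) (D.sort (· ≤ ·)) := by
        rw [Nmat_mul_Mmat_apply]
        refine sum_congr rfl fun r hr => ?_
        rw [mem_Icc] at hr
        rw [chainSum_eq_sum_chainsBetween _ hr.2, chainSum_eq_sum_chainsBetween _ hr.1, hN, hM,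
          sum_mul_sum]
    _ = _ := by
        rw [sum_Icc_sum_chainsBetween_sum_chainsBetween]
        refine sum_congr rfl fun V _ => ?_
        rw [mul_sum]
        refine sum_congr rfl fun r hr => ?_
        rw [consecPairsProd_sort_filter_ge_mul_sort_filter_le V hr, mul_comm]

end Matrices

theorem Nmat_mul_Mmat_eq_one_general (n : ℕ) (s : Fin n → ℂ)
    (hs : Function.Injective s) (x : Fin n → Fin n → ℂ) :
    Nmat n s x * Mmat n s x = 1 := by
  ext j k
  rw [Nmat_mul_Mmat_apply_eq_sum_chainsBetween]
  rcases eq_or_ne j k with rfl | hjk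
  · simp [chainsBetween_self, consecPairsProd]
  · rw [Matrix.one_apply_ne hjk]
    refine sum_eq_zero fun V hV => ?_
    rw [sum_prod_erase_inv_sub_eq_zero hs.injOn (one_lt_card_of_mem_chainsBetween hjk.symm hV),
      mul_zero]

/-- first part of Lemma B.2: `N · M = 1`, i.e. `M` is invertible with
inverse `N`, for any pairwise distinct `s_1, ..., s_n` and arbitrary parameters `x_{ji}`. -/
theorem Nmat_mul_Mmat_eq_one (n : ℕ) (hn : 1 ≤ n) (s : Fin n → ℂ)
    (hs : Function.Injective s) (x : Fin n → Fin n → ℂ) :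
    Nmat n s x * Mmat n s x = 1 :=
  Nmat_mul_Mmat_eq_one_general n s hs x
end
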